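/- Let z0,…,z4 be five distinct points in ℂ ∪ {∞}, and for i = 0,…,4 let (w0^i, w1^i, w2^i) be flattenings of the ideal simplices Δ_i = [z0,…,ẑ_i,…,z4]. The flattening condition (for each of the ten edges, the signed sum of the three associated log-parameters is zero, sign positive iff the omitted index is even) is equivalent to the ten equations: w0^2−w0^3+w0^4 = 0, −w0^1−w2^3+w2^4 = 0, w0^0−w1^3+w1^4 = 0, w2^0+w1^2+w2^4 = 0, w1^0−w1^1+w0^4 = 0, w2^0−w2^1−w0^3 = 0, w0^0−w0^1+w0^2 = 0, −w2^1+w2^2+w1^4 = 0, −w1^1+w1^2−w1^3 = 0, w1^0+w2^2−w2^3 = 0. Moreover, any five of these ten equations chosen so that each w-coordinate appears imply the remaining ones given that w0^i + w1^i + w2^i = 0 for all i. -/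

import Mathlib

/-! The edge `[z_a z_b]` lies in the three simplices `Δ_i`, `i ∉ {a, b}`, so the flattening
condition is one linear equation per edge; evaluating the edge positions turns these into
the ten equations. The edges `[z0z1], [z1z2], [z2z3], [z3z4], [z4z0]` of the 5-cycle involve
every coordinate, and modulo `w0^i + w1^i + w2^i = 0` each diagonal equation is a signed
sum of the cycle equations. -/

open Finset

/-- Position of the vertex `a` of the 4-simplex inside the 3-simplex `Δ_i`
obtained by omitting vertex `i` (induced vertex ordering). -/
def posIn (i a : Fin 5) : Fin 4 :=
  ⟨if (a : ℕ) < (i : ℕ) then (a : ℕ) else (a : ℕ) - 1, by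
    have ha := a.isLt; have hi := i.isLt; split <;> omega⟩

/-- The log-parameter coordinate (0, 1 or 2) attached to the edge of a 3-simplex
joining its `p`-th and `q`-th vertices: `w0` on edges 01 and 23, `w1` on edges 12
and 03, `w2` on edges 02 and 13. -/
def edgeIdx (p q : Fin 4) : Fin 3 :=
  if (p = 0 ∧ q = 1) ∨ (p = 1 ∧ q = 0) ∨ (p = 2 ∧ q = 3) ∨ (p = 3 ∧ q = 2) then 0
  else if (p = 1 ∧ q = 2) ∨ (p = 2 ∧ q = 1) ∨ (p = 0 ∧ q = 3) ∨ (p = 3 ∧ q = 0) then 1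
  else 2

def FlatteningCondition (w : Fin 5 → Fin 3 → ℂ) : Prop :=
  ∀ a b : Fin 5, a ≠ b →
    ∑ i ∈ Finset.univ.filter (fun i : Fin 5 => i ≠ a ∧ i ≠ b),
      ((-1 : ℂ) ^ (i : ℕ)) * w i (edgeIdx (posIn i a) (posIn i b)) = 0

def TenEquations (w : Fin 5 → Fin 3 → ℂ) : Prop :=
  w 2 0 - w 3 0 + w 4 0 = 0 ∧ -w 1 0 - w 3 2 + w 4 2 = 0 ∧
  w 0 0 - w 3 1 + w 4 1 = 0 ∧ w 0 2 + w 2 1 + w 4 2 = 0 ∧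
  w 0 1 - w 1 1 + w 4 0 = 0 ∧ w 0 2 - w 1 2 - w 3 0 = 0 ∧
  w 0 0 - w 1 0 + w 2 0 = 0 ∧ -w 1 2 + w 2 2 + w 4 1 = 0 ∧
  -w 1 1 + w 2 1 - w 3 1 = 0 ∧ w 0 1 + w 2 2 - w 3 2 = 0

theorem edgeIdx_comm (p q : Fin 4) : edgeIdx p q = edgeIdx q p := by
  revert p q; decide

section EdgeSum

variable {R : Type*} [CommRing R]

def edgeSum (w : Fin 5 → Fin 3 → R) (a b : Fin 5) : R :=
  ∑ i ∈ univ.filter (fun i : Fin 5 => i ≠ a ∧ i ≠ b),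
    (-1 : R) ^ (i : ℕ) * w i (edgeIdx (posIn i a) (posIn i b))

theorem edgeSum_comm (w : Fin 5 → Fin 3 → R) (a b : Fin 5) : edgeSum w a b = edgeSum w b a := by
  simp only [edgeSum, and_comm, edgeIdx_comm (posIn _ a)]

theorem edgeSum_values (w : Fin 5 → Fin 3 → R) :
    edgeSum w 0 1 = w 2 0 - w 3 0 + w 4 0 ∧ edgeSum w 0 2 = -w 1 0 - w 3 2 + w 4 2 ∧
    edgeSum w 1 2 = w 0 0 - w 3 1 + w 4 1 ∧ edgeSum w 1 3 = w 0 2 + w 2 1 + w 4 2 ∧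
    edgeSum w 2 3 = w 0 1 - w 1 1 + w 4 0 ∧ edgeSum w 2 4 = w 0 2 - w 1 2 - w 3 0 ∧
    edgeSum w 3 4 = w 0 0 - w 1 0 + w 2 0 ∧ edgeSum w 0 3 = -w 1 2 + w 2 2 + w 4 1 ∧
    edgeSum w 0 4 = -w 1 1 + w 2 1 - w 3 1 ∧ edgeSum w 1 4 = w 0 1 + w 2 2 - w 3 2 := by
  refine ⟨?_, ?_, ?_, ?_, ?_, ?_, ?_, ?_, ?_, ?_⟩ <;>
    simp [edgeSum, sum_filter, Fin.sum_univ_five, posIn, edgeIdx] <;> ring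

end EdgeSum

theorem flatteningCondition_iff_forall_lt (w : Fin 5 → Fin 3 → ℂ) :
    FlatteningCondition w ↔ ∀ a b : Fin 5, a < b → edgeSum w a b = 0 := by
  refine ⟨fun h a b hab => h a b hab.ne, fun h a b hab => ?_⟩
  rcases hab.lt_or_gt with hab | hab
  · exact h a b hab
  · exact (edgeSum_comm w a b).trans (h b a hab)

theorem flatteningCondition_iff_tenEquations (w : Fin 5 → Fin 3 → ℂ) :
    FlatteningCondition w ↔ TenEquations w := by
  obtain ⟨e01, e02, e12, e13, e23, e24, e34, e03, e04, e14⟩ := edgeSum_values w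
  rw [flatteningCondition_iff_forall_lt, TenEquations]
  constructor
  · intro h
    exact ⟨e01 ▸ h 0 1 (by decide), e02 ▸ h 0 2 (by decide), e12 ▸ h 1 2 (by decide),
      e13 ▸ h 1 3 (by decide), e23 ▸ h 2 3 (by decide), e24 ▸ h 2 4 (by decide),
      e34 ▸ h 3 4 (by decide), e03 ▸ h 0 3 (by decide), e04 ▸ h 0 4 (by decide),
      e14 ▸ h 1 4 (by decide)⟩
  · rintro ⟨h01, h02, h12, h13, h23, h24, h34, h03, h04, h14⟩ a b hab
    fin_cases a <;> fin_cases b <;> simp_all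

theorem tenEquations_of_cycle_equations (w : Fin 5 → Fin 3 → ℂ)
    (hsum : ∀ i : Fin 5, w i 0 + w i 1 + w i 2 = 0)
    (e01 : w 2 0 - w 3 0 + w 4 0 = 0) (e12 : w 0 0 - w 3 1 + w 4 1 = 0)
    (e23 : w 0 1 - w 1 1 + w 4 0 = 0) (e34 : w 0 0 - w 1 0 + w 2 0 = 0)
    (e04 : -w 1 1 + w 2 1 - w 3 1 = 0) : TenEquations w :=
  ⟨e01, by linear_combination -e01 - e12 + e34 - hsum 3 + hsum 4, e12,
    by linear_combination -e12 - e23 + e04 + hsum 0 + hsum 4, e23,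
    by linear_combination e01 - e23 - e34 + hsum 0 - hsum 1, e34,
    by linear_combination e12 - e34 - e04 - hsum 1 + hsum 2, e04,
    by linear_combination -e01 + e23 - e04 + hsum 2 - hsum 3⟩

/-- the flattening condition is equivalent to the ten equations; moreover
five of them (those for the edges `[z0z1]`, `[z1z2]`, `[z2z3]`, `[z3z4]`, `[z4z0]`,
in which every `w`-coordinate appears) together with `w0^i + w1^i + w2^i = 0` imply
the remaining ones. -/
theorem flattening_condition_ten_equations (w : Fin 5 → Fin 3 → ℂ)
    (hsum : ∀ i : Fin 5, w i 0 + w i 1 + w i 2 = 0) :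
    (FlatteningCondition w ↔ TenEquations w) ∧
    ((w 2 0 - w 3 0 + w 4 0 = 0 ∧ w 0 0 - w 3 1 + w 4 1 = 0 ∧
      w 0 1 - w 1 1 + w 4 0 = 0 ∧ w 0 0 - w 1 0 + w 2 0 = 0 ∧
      -w 1 1 + w 2 1 - w 3 1 = 0) → TenEquations w) :=
  ⟨flatteningCondition_iff_tenEquations w, fun ⟨e01, e12, e23, e34, e04⟩ =>
    tenEquations_of_cycle_equations w hsum e01 e12 e23 e34 e04⟩
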